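/- For the Wick product on ℂ^{n+1} \ {0} and any two polynomial functions F, G in the variables z, \bar z, the sum defining F * G is finite (only finitely many terms are nonzero), and the Wick product of polynomials is associative: (F*G)*H = F*(G*H) for polynomials F, G, H. -/

import Mathlib

noncomputable section

/-- Polynomials in the commuting variables `z⁰,…,zⁿ, z̄⁰,…,z̄ⁿ`. -/
abbrev Pol (n : ℕ) := MvPolynomial (Fin (n + 1) ⊕ Fin (n + 1)) ℂ

/-- Iterated formal derivative `∂^r/∂z^{i₁}⋯∂z^{i_r}`. -/
def dIter (n : ℕ) (l : List (Fin (n + 1))) (F : Pol n) : Pol n :=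
  l.foldr (fun k q => MvPolynomial.pderiv (Sum.inl k) q) F

/-- Iterated formal derivative `∂^r/∂z̄^{i₁}⋯∂z̄^{i_r}`. -/
def dbarIter (n : ℕ) (l : List (Fin (n + 1))) (F : Pol n) : Pol n :=
  l.foldr (fun k q => MvPolynomial.pderiv (Sum.inr k) q) F

/-- The `r`-th Wick bidifferential operator on polynomials:
`(1/r!) ∑_{i₁,…,i_r} (∂^r F/∂z^{i₁}⋯∂z^{i_r})(∂^r G/∂z̄^{i₁}⋯∂z̄^{i_r})`. -/
def wickC (n r : ℕ) (F G : Pol n) : Pol n :=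
  ((r.factorial : ℂ))⁻¹ •
    ∑ i : Fin r → Fin (n + 1), dIter n (List.ofFn i) F * dbarIter n (List.ofFn i) G

/-- The Wick star product of formal series of polynomials (Cauchy product in
the formal parameter): `(f * g)_r = ∑_{a+b+c=r} W_c(f_a, g_b)`. -/
def wickStar (n : ℕ) (f g : ℕ → Pol n) : ℕ → Pol n := fun r =>
  ∑ p ∈ Finset.HasAntidiagonal.antidiagonal r, ∑ q ∈ Finset.HasAntidiagonal.antidiagonal p.2,
    wickC n p.1 (f q.1) (g q.2)

/-- A polynomial viewed as a formal series concentrated in order `0`. -/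
def emb (n : ℕ) (F : Pol n) : ℕ → Pol n := fun r => if r = 0 then F else 0


/-!
Put `F`, `G`, `H` into three disjoint copies of the variables, `Φ = F ⊗ G ⊗ H`, and let `P_{S,T}`
contract the `z`'s of the copies in `S` with the `z̄`'s of the copies in `T`. Differentiating after
identifying the copies is summing the derivatives over the copies, so the `r`-th Wick term of two
polynomials supported on disjoint sets `S`, `T` of copies is `P_{S,T}^r / r!` followed by the
identification. Hence the order-`r` part of `(F * G) * H` is
`∑_{a+b=r} P_{01,2}^a P_{0,1}^b Φ / (a! b!)` and that of `F * (G * H)` is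
`∑_{a+b=r} P_{0,12}^a P_{1,2}^b Φ / (a! b!)`. The `P_{S,T}` have constant coefficients, so they
commute, and the binomial theorem turns both sums into `(P_{0,1} + P_{0,2} + P_{1,2})^r Φ / r!`.
Finiteness: an `r`-fold derivative of `F` vanishes once `r` exceeds its total degree.
-/

open MvPolynomial Finset

namespace MvPolynomial

variable {R σ : Type*}

theorem pderiv_pderiv_comm [CommRing R] (i j : σ) (p : MvPolynomial σ R) :
    pderiv i (pderiv j p) = pderiv j (pderiv i p) := by
  have h : ⁅pderiv i, pderiv j⁆ = (0 : Derivation R (MvPolynomial σ R) (MvPolynomial σ R)) :=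
    derivation_ext fun k => by
      classical
      rw [Derivation.commutator_apply, pderiv_X, pderiv_X]
      simp [Pi.single_apply, apply_ite]
  rw [← sub_eq_zero, ← Derivation.commutator_apply, h, Derivation.zero_apply]

variable [CommSemiring R]

theorem totalDegree_pderiv_le (i : σ) (p : MvPolynomial σ R) :
    (pderiv i p).totalDegree ≤ p.totalDegree - 1 := by
  refine Finset.sup_le fun m hm => ?_
  have hm' : m + Finsupp.single i 1 ∈ p.support := by
    rw [mem_support_iff, coeff_pderiv] at hm
    exact mem_support_iff.mpr (left_ne_zero_of_mul hm)
  have := le_totalDegree hm'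
  simp [Finsupp.sum_add_index'] at this
  omega

theorem pderiv_eq_zero_of_totalDegree_eq_zero {p : MvPolynomial σ R} (h : p.totalDegree = 0)
    (i : σ) : pderiv i p = 0 := by
  rw [totalDegree_eq_zero_iff_eq_C.mp h, pderiv_C]

theorem rename_mem_supported_range {τ : Type*} (f : σ → τ) (p : MvPolynomial σ R) :
    rename f p ∈ supported R (Set.range f) := by
  classical
  rw [mem_supported]
  refine (Finset.coe_subset.mpr (vars_rename f p)).trans ?_
  simp

theorem pderiv_eq_zero_of_mem_supported {s : Set σ} {p : MvPolynomial σ R}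
    (hp : p ∈ supported R s) {i : σ} (hi : i ∉ s) : pderiv i p = 0 :=
  pderiv_eq_zero_of_notMem_vars fun h => hi (mem_supported.mp hp (Finset.mem_coe.mpr h))

theorem pderiv_mem_supported {s : Set σ} {p : MvPolynomial σ R} (hp : p ∈ supported R s)
    (i : σ) : pderiv i p ∈ supported R s := by
  by_cases hi : i ∈ s
  · rw [supported_eq_range_rename, AlgHom.mem_range] at hp
    obtain ⟨q, rfl⟩ := hp
    rw [supported_eq_range_rename, ← show ((⟨i, hi⟩ : s) : σ) = i from rfl,
      pderiv_rename Subtype.val_injective]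
    exact AlgHom.mem_range_self _ _
  · rw [pderiv_eq_zero_of_mem_supported hp hi]
    exact zero_mem _

section Copies

variable {κ : Type*}

theorem rename_snd_rename_mk (k : κ) (p : MvPolynomial σ R) :
    rename Prod.snd (rename (Prod.mk k) p) = p := by
  rw [rename_rename]
  exact rename_id_apply p

theorem rename_mk_mem_supported {k : κ} {S : Set κ} (hk : k ∈ S) (p : MvPolynomial σ R) :
    rename (Prod.mk k) p ∈ supported R (Prod.fst ⁻¹' S) :=
  supported_mono (by rintro _ ⟨v, rfl⟩; exact hk) (rename_mem_supported_range _ p)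

theorem pderiv_rename_snd [Fintype κ] (v : σ) (p : MvPolynomial (κ × σ) R) :
    pderiv v (rename Prod.snd p) = ∑ k, rename Prod.snd (pderiv (k, v) p) := by
  classical
  induction p using MvPolynomial.induction_on with
  | C a => simp
  | add p q hp hq => simp [hp, hq, Finset.sum_add_distrib]
  | mul_X p x hp =>
    obtain ⟨j, w⟩ := x
    by_cases hw : w = v
    · subst hw
      simp [hp, pderiv_X, Pi.single_apply, Finset.sum_add_distrib, Finset.mul_sum, apply_ite]
    · simp [hp, pderiv_X, Finset.mul_sum, hw]

theorem pderiv_rename_snd_of_mem_supported [Fintype κ] {S : Finset κ}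
    {p : MvPolynomial (κ × σ) R} (hp : p ∈ supported R (Prod.fst ⁻¹' ↑S)) (v : σ) :
    pderiv v (rename Prod.snd p) = rename Prod.snd (∑ k ∈ S, pderiv (k, v) p) := by
  rw [pderiv_rename_snd, map_sum]
  refine (Finset.sum_subset (Finset.subset_univ S) fun k _ hk => ?_).symm
  rw [pderiv_eq_zero_of_mem_supported hp (by simpa using hk), map_zero]

end Copies

end MvPolynomial

theorem Commute.inv_factorial_smul_add_pow {K A : Type*} [Field K] [CharZero K] [Ring A]
    [Algebra K A] {x y : A} (h : Commute x y) (r : ℕ) :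
    (r.factorial : K)⁻¹ • (x + y) ^ r = ∑ p ∈ antidiagonal r,
      ((p.1.factorial : K)⁻¹ * (p.2.factorial : K)⁻¹) • (x ^ p.1 * y ^ p.2) := by
  rw [h.add_pow', Finset.smul_sum]
  refine Finset.sum_congr rfl fun p hp => ?_
  rw [← Nat.cast_smul_eq_nsmul K, smul_smul, ← HasAntidiagonal.mem_antidiagonal.mp hp,
    Nat.cast_add_choose]
  have : ((p.1 + p.2).factorial : K) ≠ 0 := Nat.cast_ne_zero.mpr (Nat.factorial_ne_zero _)
  field_simp

section WickOperator

variable {κ ι R : Type*} [Fintype ι] [CommRing R]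

/-- `(k, .inl i)` and `(k, .inr i)` are `z^i` and `z̄^i` in the `k`-th copy of the variables. -/
def wickOp (S T : Finset κ) : Module.End R (MvPolynomial (κ × (ι ⊕ ι)) R) :=
  ∑ s ∈ S, ∑ t ∈ T, ∑ i,
    (pderiv (t, Sum.inr i)).toLinearMap * (pderiv (s, Sum.inl i)).toLinearMap

theorem wickOp_apply (S T : Finset κ) (Φ : MvPolynomial (κ × (ι ⊕ ι)) R) :
    wickOp S T Φ = ∑ s ∈ S, ∑ t ∈ T, ∑ i, pderiv (t, Sum.inr i) (pderiv (s, Sum.inl i) Φ) := by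
  simp [wickOp, LinearMap.sum_apply]

theorem commute_wickOp (S T S' T' : Finset κ) :
    Commute (wickOp S T : Module.End R (MvPolynomial (κ × (ι ⊕ ι)) R)) (wickOp S' T') := by
  have h (x y : κ × (ι ⊕ ι)) :
      Commute (pderiv x : Derivation R _ _).toLinearMap (pderiv y).toLinearMap :=
    LinearMap.ext (pderiv_pderiv_comm x y)
  refine .sum_left _ _ _ fun _ _ => .sum_left _ _ _ fun _ _ => .sum_left _ _ _ fun _ _ => ?_
  refine .sum_right _ _ _ fun _ _ => .sum_right _ _ _ fun _ _ => .sum_right _ _ _ fun _ _ => ?_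
  exact ((h _ _).mul_left (h _ _)).mul_right ((h _ _).mul_left (h _ _))

theorem wickOp_pow_mem_supported (S T : Finset κ) {s : Set (κ × (ι ⊕ ι))}
    {Φ : MvPolynomial (κ × (ι ⊕ ι)) R} (hΦ : Φ ∈ supported R s) (a : ℕ) :
    (wickOp S T ^ a) Φ ∈ supported R s := by
  induction a with
  | zero => simpa
  | succ a ih =>
    rw [pow_succ', Module.End.mul_apply, wickOp_apply]
    exact sum_mem fun _ _ => sum_mem fun _ _ => sum_mem fun _ _ =>
      pderiv_mem_supported (pderiv_mem_supported ih _) _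

theorem wickOp_pow_mul_of_mem_supported {S T U : Finset κ} (hS : Disjoint S U)
    (hT : Disjoint T U) {Θ : MvPolynomial (κ × (ι ⊕ ι)) R}
    (hΘ : Θ ∈ supported R (Prod.fst ⁻¹' ↑U)) (a : ℕ) (Φ : MvPolynomial (κ × (ι ⊕ ι)) R) :
    (wickOp S T ^ a) (Φ * Θ) = (wickOp S T ^ a) Φ * Θ := by
  have hΘ' {k : κ} (hk : k ∉ U) (w : ι ⊕ ι) : pderiv (k, w) Θ = 0 :=
    pderiv_eq_zero_of_mem_supported hΘ (by simpa using hk)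
  have step (Φ : MvPolynomial (κ × (ι ⊕ ι)) R) : wickOp S T (Φ * Θ) = wickOp S T Φ * Θ := by
    simp only [wickOp_apply, Finset.sum_mul]
    refine sum_congr rfl fun s hs => sum_congr rfl fun t ht => sum_congr rfl fun i _ => ?_
    simp [hΘ' (disjoint_left.mp hS hs), hΘ' (disjoint_left.mp hT ht), mul_comm]
  induction a generalizing Φ with
  | zero => rfl
  | succ a ih => rw [pow_succ, Module.End.mul_apply, step, ih, Module.End.mul_apply]

theorem wickOp_mul_of_mem_supported {S T : Finset κ} (hST : Disjoint S T)
    {Ψ Θ : MvPolynomial (κ × (ι ⊕ ι)) R} (hΨ : Ψ ∈ supported R (Prod.fst ⁻¹' ↑S))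
    (hΘ : Θ ∈ supported R (Prod.fst ⁻¹' ↑T)) :
    wickOp S T (Ψ * Θ)
      = ∑ i, (∑ s ∈ S, pderiv (s, Sum.inl i) Ψ) * ∑ t ∈ T, pderiv (t, Sum.inr i) Θ := by
  calc wickOp S T (Ψ * Θ)
      = ∑ s ∈ S, ∑ t ∈ T, ∑ i, pderiv (s, Sum.inl i) Ψ * pderiv (t, Sum.inr i) Θ := by
        rw [wickOp_apply]
        refine sum_congr rfl fun s hs => sum_congr rfl fun t ht => sum_congr rfl fun i _ => ?_
        have hΘs : pderiv (s, Sum.inl i) Θ = 0 :=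
          pderiv_eq_zero_of_mem_supported hΘ (by simpa using disjoint_left.mp hST hs)
        have hΨt : pderiv (t, Sum.inr i) (pderiv (s, Sum.inl i) Ψ) = 0 :=
          pderiv_eq_zero_of_mem_supported (pderiv_mem_supported hΨ _)
            (by simpa using disjoint_right.mp hST ht)
        simp [hΘs, hΨt]
    _ = ∑ i, (∑ s ∈ S, pderiv (s, Sum.inl i) Ψ) * ∑ t ∈ T, pderiv (t, Sum.inr i) Θ := by
        simp_rw [sum_mul_sum]
        exact (sum_congr rfl fun _ _ => sum_comm).trans sum_comm

end WickOperator

theorem sum_ofFn_succ {α M : Type*} [Fintype α] [AddCommMonoid M] (r : ℕ)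
    (φ : List α → M) :
    ∑ i : Fin (r + 1) → α, φ (List.ofFn i) = ∑ v, ∑ i : Fin r → α, φ (List.ofFn i ++ [v]) := by
  rw [← Fintype.sum_prod_type', ← (Fin.snocEquiv fun _ => α).sum_comp]
  simp only [Fin.snocEquiv_apply, List.ofFn_succ', Fin.snoc_castSucc, Fin.snoc_last,
    List.concat_eq_append]

section Wick

variable {n : ℕ}

theorem totalDegree_dIter_le (l : List (Fin (n + 1))) (F : Pol n) :
    (dIter n l F).totalDegree ≤ F.totalDegree - l.length := by
  induction l with
  | nil => exact Nat.le_refl _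
  | cons k l ih =>
    refine (totalDegree_pderiv_le (Sum.inl k) (dIter n l F)).trans ?_
    simp only [List.length_cons]
    omega

theorem dIter_eq_zero_of_totalDegree_lt {l : List (Fin (n + 1))} {F : Pol n}
    (h : F.totalDegree < l.length) : dIter n l F = 0 := by
  cases l with
  | nil => simp at h
  | cons k l =>
    have := totalDegree_dIter_le l F
    simp only [List.length_cons] at h
    exact pderiv_eq_zero_of_totalDegree_eq_zero (p := dIter n l F) (by omega) _

theorem wickC_eq_zero_of_totalDegree_lt {r : ℕ} {F : Pol n} (h : F.totalDegree < r)
    (G : Pol n) : wickC n r F G = 0 := by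
  rw [wickC, sum_eq_zero fun i _ => ?_, smul_zero]
  rw [dIter_eq_zero_of_totalDegree_lt (by simpa using h), zero_mul]

theorem dIter_append_singleton (l : List (Fin (n + 1))) (v : Fin (n + 1)) (F : Pol n) :
    dIter n (l ++ [v]) F = dIter n l (pderiv (Sum.inl v) F) :=
  List.foldr_append ..

theorem dbarIter_append_singleton (l : List (Fin (n + 1))) (v : Fin (n + 1)) (F : Pol n) :
    dbarIter n (l ++ [v]) F = dbarIter n l (pderiv (Sum.inr v) F) :=
  List.foldr_append ..

theorem dIter_zero (l : List (Fin (n + 1))) : dIter n l 0 = 0 := by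
  induction l with
  | nil => rfl
  | cons k l ih => exact (congrArg (pderiv (Sum.inl k)) ih).trans (map_zero _)

theorem dbarIter_zero (l : List (Fin (n + 1))) : dbarIter n l 0 = 0 := by
  induction l with
  | nil => rfl
  | cons k l ih => exact (congrArg (pderiv (Sum.inr k)) ih).trans (map_zero _)

theorem wickC_zero_left (r : ℕ) (G : Pol n) : wickC n r 0 G = 0 := by
  simp [wickC, dIter_zero]

theorem wickC_zero_right (r : ℕ) (F : Pol n) : wickC n r F 0 = 0 := by
  simp [wickC, dbarIter_zero]

theorem wickStar_emb_right (f : ℕ → Pol n) (H : Pol n) :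
    wickStar n f (emb n H) = fun r => ∑ p ∈ antidiagonal r, wickC n p.1 (f p.2) H := by
  funext r
  refine sum_congr rfl fun p _ => ?_
  refine (sum_eq_single_of_mem (p.2, 0) (by simp) fun q hq hne => ?_).trans (by simp [emb])
  rw [HasAntidiagonal.mem_antidiagonal] at hq
  have : q.2 ≠ 0 := fun h => hne (Prod.ext (by omega) h)
  simp [emb, this, wickC_zero_right]

theorem wickStar_emb_left (F : Pol n) (g : ℕ → Pol n) :
    wickStar n (emb n F) g = fun r => ∑ p ∈ antidiagonal r, wickC n p.1 F (g p.2) := by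
  funext r
  refine sum_congr rfl fun p _ => ?_
  refine (sum_eq_single_of_mem (0, p.2) (by simp) fun q hq hne => ?_).trans (by simp [emb])
  rw [HasAntidiagonal.mem_antidiagonal] at hq
  have : q.1 ≠ 0 := fun h => hne (Prod.ext h (by omega))
  simp [emb, this, wickC_zero_left]

theorem wickStar_emb_emb (F G : Pol n) :
    wickStar n (emb n F) (emb n G) = fun r => wickC n r F G := by
  rw [wickStar_emb_right]
  funext r
  refine (sum_eq_single_of_mem (r, 0) (by simp) fun p hp hne => ?_).trans (by simp [emb])
  rw [HasAntidiagonal.mem_antidiagonal] at hp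
  have : p.2 ≠ 0 := fun h => hne (Prod.ext (by omega) h)
  simp [emb, this, wickC_zero_left]

section Copies

variable {κ : Type*} [Fintype κ] {S T : Finset κ}
  {Ψ Θ : MvPolynomial (κ × (Fin (n + 1) ⊕ Fin (n + 1))) ℂ}

theorem sum_dIter_mul_dbarIter_rename_snd (hST : Disjoint S T) (a : ℕ)
    (hΨ : Ψ ∈ supported ℂ (Prod.fst ⁻¹' ↑S)) (hΘ : Θ ∈ supported ℂ (Prod.fst ⁻¹' ↑T)) :
    ∑ i : Fin a → Fin (n + 1),
        dIter n (List.ofFn i) (rename Prod.snd Ψ) * dbarIter n (List.ofFn i) (rename Prod.snd Θ)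
      = rename Prod.snd ((wickOp S T ^ a) (Ψ * Θ)) := by
  induction a generalizing Ψ Θ with
  | zero => simp [dIter, dbarIter]
  | succ a ih =>
    rw [sum_ofFn_succ a fun l => dIter n l _ * dbarIter n l _, pow_succ, Module.End.mul_apply,
      wickOp_mul_of_mem_supported hST hΨ hΘ, map_sum, map_sum]
    refine sum_congr rfl fun v _ => ?_
    rw [← ih (sum_mem fun s _ => pderiv_mem_supported hΨ _)
      (sum_mem fun t _ => pderiv_mem_supported hΘ _)]
    simp only [dIter_append_singleton, dbarIter_append_singleton,
      pderiv_rename_snd_of_mem_supported hΨ, pderiv_rename_snd_of_mem_supported hΘ]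

theorem wickC_rename_snd (hST : Disjoint S T) (a : ℕ)
    (hΨ : Ψ ∈ supported ℂ (Prod.fst ⁻¹' ↑S)) (hΘ : Θ ∈ supported ℂ (Prod.fst ⁻¹' ↑T)) :
    wickC n a (rename Prod.snd Ψ) (rename Prod.snd Θ)
      = (a.factorial : ℂ)⁻¹ • rename Prod.snd ((wickOp S T ^ a) (Ψ * Θ)) := by
  rw [wickC, sum_dIter_mul_dbarIter_rename_snd hST a hΨ hΘ]

end Copies

abbrev Pol3 (n : ℕ) := MvPolynomial (Fin 3 × (Fin (n + 1) ⊕ Fin (n + 1))) ℂ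

def tensor3 (F G H : Pol n) : Pol3 n :=
  rename (Prod.mk 0) F * rename (Prod.mk 1) G * rename (Prod.mk 2) H

theorem wickC_eq_rename_snd_wickOp {κ : Type*} [Fintype κ] {j k : κ} (hjk : j ≠ k) (b : ℕ)
    (F G : Pol n) :
    wickC n b F G = (b.factorial : ℂ)⁻¹ • rename Prod.snd
      ((wickOp {j} {k} ^ b) (rename (Prod.mk j) F * rename (Prod.mk k) G)) := by
  have := wickC_rename_snd (n := n) (disjoint_singleton.mpr hjk) b
    (rename_mk_mem_supported (mem_singleton_self j) F)
    (rename_mk_mem_supported (mem_singleton_self k) G)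
  rwa [rename_snd_rename_mk, rename_snd_rename_mk] at this

theorem wickC_wickC_left (a b : ℕ) (F G H : Pol n) :
    wickC n a (wickC n b F G) H
      = (a.factorial : ℂ)⁻¹ • (b.factorial : ℂ)⁻¹ • rename Prod.snd
          ((wickOp {0, 1} {2} ^ a * wickOp {0} {1} ^ b : Module.End ℂ (Pol3 n))
            (tensor3 F G H)) := by
  set Ψ : Pol3 n := (b.factorial : ℂ)⁻¹ •
    (wickOp {0} {1} ^ b) (rename (Prod.mk 0) F * rename (Prod.mk 1) G) with hΨ_def
  have hΨ : Ψ ∈ supported ℂ (Prod.fst ⁻¹' ↑({0, 1} : Finset (Fin 3))) :=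
    Subalgebra.smul_mem _ (wickOp_pow_mem_supported _ _ (mul_mem
      (rename_mk_mem_supported (by simp) F) (rename_mk_mem_supported (by simp) G)) b) _
  calc wickC n a (wickC n b F G) H
      = wickC n a (rename Prod.snd Ψ) (rename Prod.snd (rename (Prod.mk 2) H)) := by
        rw [wickC_eq_rename_snd_wickOp (show (0 : Fin 3) ≠ 1 by decide) b F G, hΨ_def, map_smul,
          rename_snd_rename_mk]
    _ = (a.factorial : ℂ)⁻¹ •
          rename Prod.snd ((wickOp {0, 1} {2} ^ a) (Ψ * rename (Prod.mk 2) H)) :=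
        wickC_rename_snd (by decide) a hΨ (rename_mk_mem_supported (by simp) H)
    _ = _ := by
        rw [hΨ_def, smul_mul_assoc,
          ← wickOp_pow_mul_of_mem_supported (U := {2}) (by decide) (by decide)
            (rename_mk_mem_supported (by simp) H), map_smul, map_smul, tensor3,
          Module.End.mul_apply]

theorem wickC_wickC_right (a b : ℕ) (F G H : Pol n) :
    wickC n a F (wickC n b G H)
      = (a.factorial : ℂ)⁻¹ • (b.factorial : ℂ)⁻¹ • rename Prod.snd
          ((wickOp {0} {1, 2} ^ a * wickOp {1} {2} ^ b : Module.End ℂ (Pol3 n))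
            (tensor3 F G H)) := by
  set Ψ : Pol3 n := (b.factorial : ℂ)⁻¹ •
    (wickOp {1} {2} ^ b) (rename (Prod.mk 1) G * rename (Prod.mk 2) H) with hΨ_def
  have hΨ : Ψ ∈ supported ℂ (Prod.fst ⁻¹' ↑({1, 2} : Finset (Fin 3))) :=
    Subalgebra.smul_mem _ (wickOp_pow_mem_supported _ _ (mul_mem
      (rename_mk_mem_supported (by simp) G) (rename_mk_mem_supported (by simp) H)) b) _
  calc wickC n a F (wickC n b G H)
      = wickC n a (rename Prod.snd (rename (Prod.mk 0) F)) (rename Prod.snd Ψ) := by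
        rw [wickC_eq_rename_snd_wickOp (show (1 : Fin 3) ≠ 2 by decide) b G H, hΨ_def, map_smul,
          rename_snd_rename_mk]
    _ = (a.factorial : ℂ)⁻¹ •
          rename Prod.snd ((wickOp {0} {1, 2} ^ a) (rename (Prod.mk 0) F * Ψ)) :=
        wickC_rename_snd (by decide) a (rename_mk_mem_supported (by simp) F) hΨ
    _ = _ := by
        rw [hΨ_def, mul_smul_comm, mul_comm (rename (Prod.mk 0) F),
          ← wickOp_pow_mul_of_mem_supported (U := {0}) (by decide) (by decide)
            (rename_mk_mem_supported (by simp) F), map_smul, map_smul, tensor3,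
          Module.End.mul_apply, mul_comm _ (rename (Prod.mk 0) F), ← mul_assoc]

theorem sum_antidiagonal_wickC_wickC_left (r : ℕ) (F G H : Pol n) :
    ∑ p ∈ antidiagonal r, wickC n p.1 (wickC n p.2 F G) H
      = rename Prod.snd (((r.factorial : ℂ)⁻¹ • (wickOp {0, 1} {2} + wickOp {0} {1}) ^ r
          : Module.End ℂ (Pol3 n)) (tensor3 F G H)) := by
  rw [Commute.inv_factorial_smul_add_pow (commute_wickOp _ _ _ _), LinearMap.sum_apply, map_sum]
  refine sum_congr rfl fun p _ => ?_
  rw [wickC_wickC_left, LinearMap.smul_apply, map_smul, mul_smul]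

theorem sum_antidiagonal_wickC_wickC_right (r : ℕ) (F G H : Pol n) :
    ∑ p ∈ antidiagonal r, wickC n p.1 F (wickC n p.2 G H)
      = rename Prod.snd (((r.factorial : ℂ)⁻¹ • (wickOp {0} {1, 2} + wickOp {1} {2}) ^ r
          : Module.End ℂ (Pol3 n)) (tensor3 F G H)) := by
  rw [Commute.inv_factorial_smul_add_pow (commute_wickOp _ _ _ _), LinearMap.sum_apply, map_sum]
  refine sum_congr rfl fun p _ => ?_
  rw [wickC_wickC_right, LinearMap.smul_apply, map_smul, mul_smul]

end Wick

/-- For polynomials `F, G` in `z, z̄` the sum defining the Wick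
product is finite (all but finitely many Wick terms vanish), and the Wick
product of polynomials is associative: `(F*G)*H = F*(G*H)`. -/
theorem wick_polynomials_finite_and_associative (n : ℕ) (F G H : Pol n) :
    (∃ N : ℕ, ∀ r : ℕ, N ≤ r → wickC n r F G = 0) ∧
    wickStar n (wickStar n (emb n F) (emb n G)) (emb n H) =
      wickStar n (emb n F) (wickStar n (emb n G) (emb n H)) := by
  refine ⟨⟨F.totalDegree + 1, fun r hr => wickC_eq_zero_of_totalDegree_lt (by omega) G⟩, ?_⟩
  have hcontractions : (wickOp {0, 1} {2} + wickOp {0} {1} : Module.End ℂ (Pol3 n))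
      = wickOp {0} {1, 2} + wickOp {1} {2} := by
    simp only [wickOp, sum_insert (show (0 : Fin 3) ∉ ({1} : Finset (Fin 3)) by decide),
      sum_insert (show (1 : Fin 3) ∉ ({2} : Finset (Fin 3)) by decide), sum_singleton]
    abel
  rw [wickStar_emb_emb, wickStar_emb_emb, wickStar_emb_right, wickStar_emb_left]
  funext r
  rw [sum_antidiagonal_wickC_wickC_left, sum_antidiagonal_wickC_wickC_right, hcontractions]
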